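/- arXiv:1701.05458 — 2 statements merged into one kernel-verified Lean document; each statement's English description precedes it below -/
import Mathlib

section
/- With U^{(3)} = ∫_0^Z ψ(φ_n,u) dC(u) and U^{(2)} = ((1-δ)/H̄(Z))·ψ(φ_n,Z) as in the competing-risks Hoeffding decomposition, one has E[(U^{(3)})^2] = 2·E[U^{(2)}·U^{(3)}], both equal to 2∫_0^∞ (∫_0^z ψ(φ_n,y) h(y) dC(y)) dH(z), where h(z) = ∫_0^z ψ(φ_n,u) dC(u). -/
/-!
Put `g = ψ / (H̄ Ḡ)`, so that `h(z) = ∫_{(0,z]} g dG`. Since `G` has no atoms, the square `(0,z]²`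
splits along its diagonal into two triangles of equal `g ⊗ g`-mass, hence
`h(z)² = 2 ∫_{(0,z]} g h dG`; integrating in `z` against `H` gives the second identity.
For the first, independence of `X` and `C` gives `E[U⁽²⁾ U⁽³⁾] = ∫ ψ h F̄ / H̄ dG = ∫ ψ h / Ḡ dG`,
and Fubini gives `∫ (∫_{(0,z]} g h dG) dH(z) = ∫ g h H[y, ∞) dG(y) = ∫ g h H̄ dG`, because
`H[y, ∞) = H̄(y)` off the countably many atoms of `H`, a `G`-null set.
-/

open MeasureTheory ProbabilityTheory Set ENNReal

section SetIntegralMeasurable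

variable {μ : Measure ℝ} {f : ℝ → ℝ}

lemma measurable_setIntegral_Ioc (hf : Measurable f) (hf0 : 0 ≤ f) (a : ℝ) :
    Measurable fun z => ∫ u in Ioc a z, f u ∂μ := by
  have : (fun z => ∫ u in Ioc a z, f u ∂μ)
      = fun z => (∫⁻ u in Ioc a z, ENNReal.ofReal (f u) ∂μ).toReal := funext fun _ =>
    integral_eq_lintegral_of_nonneg_ae (ae_of_all _ hf0) hf.aestronglyMeasurable
  rw [this]
  exact (Monotone.measurable fun _ _ h =>
    lintegral_mono_set (Ioc_subset_Ioc_right h)).ennreal_toReal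

lemma measurable_setIntegral_Ioi (hf : Measurable f) (hf0 : 0 ≤ f) :
    Measurable fun u => ∫ s in Ioi u, f s ∂μ := by
  have : (fun u => ∫ s in Ioi u, f s ∂μ)
      = fun u => (∫⁻ s in Ioi u, ENNReal.ofReal (f s) ∂μ).toReal := funext fun _ =>
    integral_eq_lintegral_of_nonneg_ae (ae_of_all _ hf0) hf.aestronglyMeasurable
  rw [this]
  exact (Antitone.measurable fun _ _ h =>
    lintegral_mono_set (Ioi_subset_Ioi h)).ennreal_toReal

end SetIntegralMeasurable

section SquareOfSetIntegral

variable {ν : Measure ℝ}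

lemma setLIntegral_Ioc_eq_add (g : ℝ → ℝ≥0∞) {a y z : ℝ} (hay : a ≤ y) (hyz : y ≤ z) :
    ∫⁻ u in Ioc a z, g u ∂ν = ∫⁻ u in Ioc a y, g u ∂ν + ∫⁻ u in Ioc y z, g u ∂ν := by
  rw [← lintegral_union measurableSet_Ioc (Ioc_disjoint_Ioc_of_le le_rfl),
    Ioc_union_Ioc_eq_Ioc hay hyz]

lemma setLIntegral_mul_setLIntegral_inter_Ioi [SFinite ν] {g : ℝ → ℝ≥0∞} (hg : Measurable g)
    (A : Set ℝ) :
    ∫⁻ y in A, g y * ∫⁻ u in A ∩ Ioi y, g u ∂ν ∂ν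
      = ∫⁻ u in A, g u * ∫⁻ y in A ∩ Iio u, g y ∂ν ∂ν := by
  have inner : ∀ y (B : Set ℝ), MeasurableSet B →
      ∫⁻ u in A, B.indicator (fun u => g y * g u) u ∂ν = g y * ∫⁻ u in A ∩ B, g u ∂ν := by
    intro y B hB
    rw [lintegral_indicator hB, Measure.restrict_restrict hB, inter_comm,
      lintegral_const_mul _ hg]
  simp_rw [← inner _ _ measurableSet_Ioi, ← inner _ _ measurableSet_Iio]
  have hm : Measurable (Function.uncurry fun y u => (Ioi y).indicator (fun u => g y * g u) u) := by
    have : (Function.uncurry fun y u => (Ioi y).indicator (fun u => g y * g u) u)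
        = {p : ℝ × ℝ | p.1 < p.2}.indicator (fun p => g p.1 * g p.2) := by
      ext ⟨y, u⟩; simp [indicator]
    rw [this]
    exact ((hg.comp measurable_fst).mul (hg.comp measurable_snd)).indicator
      (measurableSet_lt measurable_fst measurable_snd)
  refine (lintegral_lintegral_swap hm.aemeasurable).trans ?_
  refine lintegral_congr fun u => lintegral_congr fun y => ?_
  by_cases hyu : y < u <;> simp [indicator, hyu, mul_comm]

lemma sq_setLIntegral_Ioc [SFinite ν] [NullSingletonClass ν] {g : ℝ → ℝ≥0∞}
    (hg : Measurable g) (a z : ℝ) :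
    (∫⁻ u in Ioc a z, g u ∂ν) ^ 2 = 2 * ∫⁻ y in Ioc a z, g y * ∫⁻ u in Ioc a y, g u ∂ν ∂ν := by
  set G := fun w => ∫⁻ u in Ioc a w, g u ∂ν
  have hGm : Measurable G :=
    Monotone.measurable fun _ _ hab => lintegral_mono_set (Ioc_subset_Ioc_right hab)
  have split : ∀ y ∈ Ioc a z, G z = G y + ∫⁻ u in Ioc a z ∩ Ioi y, g u ∂ν := fun y hy => by
    rw [Ioc_inter_Ioi, sup_eq_right.mpr hy.1.le]
    exact setLIntegral_Ioc_eq_add g hy.1.le hy.2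
  have swap : ∫⁻ y in Ioc a z, g y * ∫⁻ u in Ioc a z ∩ Ioi y, g u ∂ν ∂ν
      = ∫⁻ y in Ioc a z, g y * G y ∂ν := by
    rw [setLIntegral_mul_setLIntegral_inter_Ioi hg]
    refine setLIntegral_congr_fun measurableSet_Ioc fun u hu => ?_
    have : Ioc a z ∩ Iio u = Ioo a u := by
      ext y
      simp only [mem_inter_iff, mem_Ioc, mem_Iio, mem_Ioo]
      exact ⟨fun h => ⟨h.1.1, h.2⟩, fun h => ⟨⟨h.1, h.2.le.trans hu.2⟩, h.2⟩⟩
    rw [this, setLIntegral_congr Ioo_ae_eq_Ioc]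
  calc G z ^ 2 = ∫⁻ y in Ioc a z, g y * G z ∂ν := by rw [sq, lintegral_mul_const _ hg]
    _ = ∫⁻ y in Ioc a z, g y * G y ∂ν
          + ∫⁻ y in Ioc a z, g y * ∫⁻ u in Ioc a z ∩ Ioi y, g u ∂ν ∂ν := by
        rw [← lintegral_add_left (f := fun y => g y * G y) (hg.mul hGm)]
        refine setLIntegral_congr_fun measurableSet_Ioc fun y hy => ?_
        rw [split y hy, mul_add]
    _ = _ := by rw [swap, two_mul]

lemma setLIntegral_Ioc_ofReal_mul_setIntegral [SFinite ν] [NullSingletonClass ν] {f : ℝ → ℝ}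
    (hf : Measurable f) (hf0 : 0 ≤ f) {a : ℝ}
    (hloc : ∀ y z, a < y → f y ≠ 0 → IntegrableOn f (Ioc y z) ν) (z : ℝ) :
    ∫⁻ y in Ioc a z, ENNReal.ofReal (f y * ∫ u in Ioc a y, f u ∂ν) ∂ν
      = ENNReal.ofReal ((∫ u in Ioc a z, f u ∂ν) ^ 2 / 2) := by
  set G := fun w => ∫⁻ u in Ioc a w, ENNReal.ofReal (f u) ∂ν
  have hG : ∀ w, ∫ u in Ioc a w, f u ∂ν = (G w).toReal := fun w =>
    integral_eq_lintegral_of_nonneg_ae (ae_of_all _ hf0) hf.aestronglyMeasurable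
  simp_rw [hG]
  by_cases hz : G z = ∞
  · -- Then the real integrand vanishes: where `f y ≠ 0`, `hloc` makes `G` finite on `(y, z]`,
    -- so `G y = ∞` and its `toReal` is the junk value `0`.
    have hvanish : ∀ y ∈ Ioc a z, ENNReal.ofReal (f y * (G y).toReal) = 0 := by
      intro y hy
      rcases eq_or_ne (f y) 0 with hfy | hfy
      · simp [hfy]
      have hGy : G y = ∞ := by
        have htail := (hloc y z hy.1 hfy).lintegral_lt_top
        have hsplit : G z = G y + ∫⁻ u in Ioc y z, ENNReal.ofReal (f u) ∂ν :=
          setLIntegral_Ioc_eq_add _ hy.1.le hy.2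
        by_contra hGy
        exact ENNReal.add_ne_top.mpr ⟨hGy, htail.ne⟩ (hsplit ▸ hz)
      simp [hGy]
    rw [setLIntegral_congr_fun measurableSet_Ioc hvanish, lintegral_zero, hz]
    simp
  · have hGle : ∀ y ∈ Ioc a z, G y ≠ ∞ := fun y hy =>
      ne_top_of_le_ne_top hz (lintegral_mono_set (Ioc_subset_Ioc_right hy.2))
    calc ∫⁻ y in Ioc a z, ENNReal.ofReal (f y * (G y).toReal) ∂ν
        = ∫⁻ y in Ioc a z, ENNReal.ofReal (f y) * G y ∂ν := by
          refine setLIntegral_congr_fun measurableSet_Ioc fun y hy => ?_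
          rw [ENNReal.ofReal_mul (hf0 y), ENNReal.ofReal_toReal (hGle y hy)]
      _ = G z ^ 2 / 2 := by
          rw [sq_setLIntegral_Ioc hf.ennreal_ofReal, mul_comm,
            ENNReal.mul_div_cancel_right two_ne_zero ofNat_ne_top]
      _ = ENNReal.ofReal ((G z).toReal ^ 2 / 2) := by
          rw [ENNReal.ofReal_div_of_pos two_pos, ← toReal_pow, ofReal_toReal (pow_ne_top hz),
            ofReal_ofNat]

lemma setIntegral_Ioc_mul_setIntegral [SFinite ν] [NullSingletonClass ν] {f : ℝ → ℝ}
    (hf : Measurable f) (hf0 : 0 ≤ f) {a : ℝ}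
    (hloc : ∀ y z, a < y → f y ≠ 0 → IntegrableOn f (Ioc y z) ν) (z : ℝ) :
    ∫ y in Ioc a z, f y * ∫ u in Ioc a y, f u ∂ν ∂ν = (∫ u in Ioc a z, f u ∂ν) ^ 2 / 2 := by
  have hH0 : ∀ y, 0 ≤ ∫ u in Ioc a y, f u ∂ν := fun y =>
    setIntegral_nonneg measurableSet_Ioc fun u _ => hf0 u
  rw [integral_eq_lintegral_of_nonneg_ae (ae_of_all _ fun y => mul_nonneg (hf0 y) (hH0 y)) ?_,
    setLIntegral_Ioc_ofReal_mul_setIntegral hf hf0 hloc, toReal_ofReal (by positivity)]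
  exact (hf.mul (measurable_setIntegral_Ioc hf hf0 a)).aestronglyMeasurable

lemma integrableOn_Ioc_mul_setIntegral [SFinite ν] [NullSingletonClass ν] {f : ℝ → ℝ}
    (hf : Measurable f) (hf0 : 0 ≤ f) {a : ℝ}
    (hloc : ∀ y z, a < y → f y ≠ 0 → IntegrableOn f (Ioc y z) ν) (z : ℝ) :
    IntegrableOn (fun y => f y * ∫ u in Ioc a y, f u ∂ν) (Ioc a z) ν := by
  refine ⟨(hf.mul (measurable_setIntegral_Ioc hf hf0 a)).aestronglyMeasurable, ?_⟩
  rw [hasFiniteIntegral_iff_ofReal (ae_of_all _ fun y =>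
      mul_nonneg (hf0 y) (setIntegral_nonneg measurableSet_Ioc fun u _ => hf0 u)),
    setLIntegral_Ioc_ofReal_mul_setIntegral hf hf0 hloc]
  exact ofReal_lt_top

end SquareOfSetIntegral

lemma Antitone.mul_of_nonneg {α : Type*} [Preorder α] {f g : α → ℝ} (hf : Antitone f)
    (hg : Antitone g) (hf0 : ∀ x, 0 ≤ f x) (hg0 : ∀ x, 0 ≤ g x) :
    Antitone fun x => f x * g x := fun _ b h => mul_le_mul (hf h) (hg h) (hg0 b) (hf0 _)

lemma setIntegral_Ioi_le_of_ne_zero {ρ : Measure ℝ} {φ : ℝ → ℝ} (hφ0 : 0 ≤ φ) {y u : ℝ}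
    (hyu : y ≤ u) (hy : ∫ s in Ioi y, φ s ∂ρ ≠ 0) :
    ∫ s in Ioi u, φ s ∂ρ ≤ ∫ s in Ioi y, φ s ∂ρ :=
  setIntegral_mono_set (Integrable.of_integral_ne_zero hy) (ae_of_all _ fun s => hφ0 s)
    (Ioi_subset_Ioi hyu).eventuallyLE

section TailOverWeight

variable {ν : Measure ℝ} {ψ D : ℝ → ℝ}

lemma integrableOn_Ioc_div [IsFiniteMeasure ν] (hψ : Measurable ψ) (hψ0 : 0 ≤ ψ)
    (hψanti : ∀ y u, y ≤ u → ψ y ≠ 0 → ψ u ≤ ψ y) (hD : Antitone D) (hD0 : ∀ u, 0 < D u)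
    {y : ℝ} (hy : ψ y ≠ 0) (z : ℝ) :
    IntegrableOn (fun u => ψ u / D u) (Ioc y z) ν := by
  refine Measure.integrableOn_of_bounded (M := ψ y / D z) (measure_ne_top _ _)
    (hψ.div hD.measurable).aestronglyMeasurable
    (ae_restrict_of_forall_mem measurableSet_Ioc fun u hu => ?_)
  rw [Real.norm_of_nonneg (div_nonneg (hψ0 u) (hD0 u).le)]
  exact div_le_div₀ (hψ0 y) (hψanti y u hu.1.le hy) (hD0 z) (hD hu.2)

lemma setIntegral_Ioc_mul_setIntegral_div [IsFiniteMeasure ν] [NullSingletonClass ν]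
    (hψ : Measurable ψ) (hψ0 : 0 ≤ ψ) (hψanti : ∀ y u, y ≤ u → ψ y ≠ 0 → ψ u ≤ ψ y)
    (hD : Antitone D) (hD0 : ∀ u, 0 < D u) (a z : ℝ) :
    ∫ y in Ioc a z, ψ y * (∫ u in Ioc a y, ψ u / D u ∂ν) / D y ∂ν
      = (∫ u in Ioc a z, ψ u / D u ∂ν) ^ 2 / 2 := by
  simp_rw [mul_div_right_comm (ψ _)]
  exact setIntegral_Ioc_mul_setIntegral (hψ.div hD.measurable)
    (fun u => div_nonneg (hψ0 u) (hD0 u).le)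
    (fun y z _ hy => integrableOn_Ioc_div hψ hψ0 hψanti hD hD0 (fun h0 => hy (by simp [h0])) z) z

lemma integrableOn_Ioc_mul_setIntegral_div [IsFiniteMeasure ν] [NullSingletonClass ν]
    (hψ : Measurable ψ) (hψ0 : 0 ≤ ψ) (hψanti : ∀ y u, y ≤ u → ψ y ≠ 0 → ψ u ≤ ψ y)
    (hD : Antitone D) (hD0 : ∀ u, 0 < D u) (a z : ℝ) :
    IntegrableOn (fun y => ψ y * (∫ u in Ioc a y, ψ u / D u ∂ν) / D y) (Ioc a z) ν := by
  simp_rw [mul_div_right_comm (ψ _)]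
  exact integrableOn_Ioc_mul_setIntegral (hψ.div hD.measurable)
    (fun u => div_nonneg (hψ0 u) (hD0 u).le)
    (fun y z _ hy => integrableOn_Ioc_div hψ hψ0 hψanti hD hD0 (fun h0 => hy (by simp [h0])) z) z

end TailOverWeight

lemma lintegral_setLIntegral_Ioc (μ ν : Measure ℝ) [SFinite μ] [SFinite ν] {r : ℝ → ℝ≥0∞}
    (hr : Measurable r) (a : ℝ) :
    ∫⁻ z, ∫⁻ y in Ioc a z, r y ∂ν ∂μ = ∫⁻ y in Ioi a, r y * μ (Ici y) ∂ν := by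
  have hm : Measurable (Function.uncurry fun z y => (Ioc a z).indicator r y) := by
    have : (Function.uncurry fun z y => (Ioc a z).indicator r y)
        = {p : ℝ × ℝ | a < p.2 ∧ p.2 ≤ p.1}.indicator (fun p => r p.2) := by
      ext ⟨z, y⟩; simp [indicator]
    rw [this]
    exact (hr.comp measurable_snd).indicator
      ((measurableSet_lt measurable_const measurable_snd).inter
        (measurableSet_le measurable_snd measurable_fst))
  simp_rw [← lintegral_indicator measurableSet_Ioc, ← lintegral_indicator measurableSet_Ioi]
  rw [lintegral_lintegral_swap hm.aemeasurable]
  refine lintegral_congr fun y => ?_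
  have : ∀ z, (Ioc a z).indicator r y = (Ici y).indicator (fun _ => (Ioi a).indicator r y) z := by
    intro z
    by_cases hyz : y ≤ z <;> simp [indicator, hyz]
  simp_rw [this, lintegral_indicator_const measurableSet_Ici]
  by_cases hy : a < y <;> simp [indicator, hy]

lemma integral_setIntegral_Ioc (μ ν : Measure ℝ) [IsFiniteMeasure μ] [SFinite ν] {r : ℝ → ℝ}
    (hr : Measurable r) (hr0 : 0 ≤ r) {a : ℝ} (hint : ∀ z, IntegrableOn r (Ioc a z) ν) :
    ∫ z, ∫ y in Ioc a z, r y ∂ν ∂μ = ∫ y in Ioi a, r y * μ.real (Ici y) ∂ν := by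
  have hμIci : Measurable fun y => μ.real (Ici y) :=
    Antitone.measurable fun _ _ h => measureReal_mono (Ici_subset_Ici.mpr h)
  rw [integral_eq_lintegral_of_nonneg_ae
      (ae_of_all _ fun z => setIntegral_nonneg measurableSet_Ioc fun y _ => hr0 y)
      (measurable_setIntegral_Ioc hr hr0 a).aestronglyMeasurable,
    integral_eq_lintegral_of_nonneg_ae (ae_of_all _ fun y => mul_nonneg (hr0 y) measureReal_nonneg)
      (hr.mul hμIci).aestronglyMeasurable]
  congr 1
  simp_rw [ofReal_integral_eq_lintegral_ofReal (hint _) (ae_of_all _ fun y => hr0 y)]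
  rw [lintegral_setLIntegral_Ioc μ ν hr.ennreal_ofReal]
  refine lintegral_congr fun y => ?_
  rw [ofReal_mul (hr0 y), ofReal_measureReal]

lemma ae_measure_Ici_eq_measure_Ioi (μ ν : Measure ℝ) [SFinite μ] [NullSingletonClass ν] :
    ∀ᵐ y ∂ν, μ (Ici y) = μ (Ioi y) := by
  refine measure_mono_null (fun y hy => ?_)
    ((Measure.countable_meas_level_set_pos (μ := μ) measurable_id).measure_zero ν)
  by_contra h0
  simp only [mem_ofPred_eq, id, not_lt, nonpos_iff_eq_zero] at h0
  exact hy (measure_congr (Ioi_ae_eq_Ici' h0).symm)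

section Independence

variable {Ω : Type*} [MeasurableSpace Ω] {P : Measure Ω} {X C : Ω → ℝ}

lemma antitone_toReal_measure_lt [IsFiniteMeasure P] (X : Ω → ℝ) :
    Antitone fun t => (P {ω | t < X ω}).toReal := fun _ _ h =>
  ENNReal.toReal_mono (measure_ne_top _ _) (measure_mono fun _ hω => h.trans_lt hω)

lemma map_min_apply_Ioi (hX : Measurable X) (hC : Measurable C) (hXC : IndepFun X C P) (t : ℝ) :
    P.map (fun ω => min (X ω) (C ω)) (Ioi t) = P {ω | t < X ω} * P {ω | t < C ω} := by
  rw [Measure.map_apply (hX.min hC) measurableSet_Ioi]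
  simpa [preimage, lt_min_iff, ofPred_and] using
    hXC.measure_inter_preimage_eq_mul _ _ measurableSet_Ioi measurableSet_Ioi

lemma setLIntegral_lt_eq_lintegral_mul [IsFiniteMeasure P] (hX : Measurable X)
    (hC : Measurable C) (hXC : IndepFun X C P) {q : ℝ → ℝ≥0∞} (hq : Measurable q) :
    ∫⁻ ω in {ω | C ω < X ω}, q (C ω) ∂P = ∫⁻ c, q c * P {ω | c < X ω} ∂(P.map C) := by
  set F : ℝ × ℝ → ℝ≥0∞ := {p | p.2 < p.1}.indicator fun p => q p.2
  have hF : Measurable F :=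
    (hq.comp measurable_snd).indicator (measurableSet_lt measurable_snd measurable_fst)
  calc ∫⁻ ω in {ω | C ω < X ω}, q (C ω) ∂P = ∫⁻ ω, F (X ω, C ω) ∂P := by
        rw [← lintegral_indicator (measurableSet_lt hC hX)]; rfl
    _ = ∫⁻ p, F p ∂((P.map X).prod (P.map C)) := by
        rw [← (indepFun_iff_map_prod_eq_prod_map_map hX.aemeasurable hC.aemeasurable).mp hXC,
          lintegral_map hF (hX.prodMk hC)]
    _ = ∫⁻ c, ∫⁻ x, F (x, c) ∂(P.map X) ∂(P.map C) := lintegral_prod_symm' _ hF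
    _ = _ := lintegral_congr fun c => by
        have : (fun x => F (x, c)) = (Ioi c).indicator fun _ => q c := by
          ext x; simp [F, indicator]
        rw [this, lintegral_indicator_const measurableSet_Ioi,
          Measure.map_apply hX measurableSet_Ioi]
        rfl

lemma setIntegral_lt_eq_integral_mul [IsFiniteMeasure P] (hX : Measurable X)
    (hC : Measurable C) (hXC : IndepFun X C P) {q : ℝ → ℝ} (hq : Measurable q) (hq0 : 0 ≤ q) :
    ∫ ω in {ω | C ω < X ω}, q (C ω) ∂P = ∫ c, q c * P.real {ω | c < X ω} ∂(P.map C) := by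
  have hmeas : Measurable fun c => q c * P.real {ω | c < X ω} :=
    hq.mul (antitone_toReal_measure_lt X).measurable
  rw [integral_eq_lintegral_of_nonneg_ae (f := fun ω => q (C ω)) (ae_of_all _ fun ω => hq0 _)
      (hq.comp hC).aestronglyMeasurable,
    integral_eq_lintegral_of_nonneg_ae (ae_of_all _ fun c => mul_nonneg (hq0 c) measureReal_nonneg)
      hmeas.aestronglyMeasurable,
    setLIntegral_lt_eq_lintegral_mul hX hC hXC hq.ennreal_ofReal]
  congr 1
  refine lintegral_congr fun c => ?_
  rw [ofReal_mul (hq0 c), ofReal_measureReal]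

lemma setIntegral_lt_mul_eq_integral_setIntegral_Ioc [IsFiniteMeasure P] (hX : Measurable X)
    (hC : Measurable C) (hXC : IndepFun X C P) [NullSingletonClass (P.map C)] {r : ℝ → ℝ}
    (hr : Measurable r) (hr0 : 0 ≤ r) (hr_nonpos : ∀ y ≤ 0, r y = 0)
    (hint : ∀ z, IntegrableOn r (Ioc 0 z) (P.map C)) :
    ∫ ω in {ω | C ω < X ω}, r (C ω) * P.real {ω' | C ω < C ω'} ∂P
      = ∫ z, ∫ y in Ioc 0 z, r y ∂(P.map C) ∂(P.map fun ω => min (X ω) (C ω)) := by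
  rw [setIntegral_lt_eq_integral_mul (q := fun c => r c * P.real {ω | c < C ω}) hX hC hXC
      (hr.mul (antitone_toReal_measure_lt C).measurable)
      (fun c => mul_nonneg (hr0 c) measureReal_nonneg),
    integral_setIntegral_Ioc _ _ hr hr0 hint,
    ← setIntegral_eq_integral_of_forall_compl_eq_zero fun y hy => by
      simp [hr_nonpos y (not_lt.mp hy)]]
  refine setIntegral_congr_ae measurableSet_Ioi ?_
  filter_upwards [ae_measure_Ici_eq_measure_Ioi (P.map fun ω => min (X ω) (C ω)) (P.map C)]
    with y hy _
  simp only [measureReal_def]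
  rw [hy, map_min_apply_Ioi hX hC hXC, toReal_mul]
  ring

end Independence

theorem stmt_12_general {Ω : Type*} [MeasurableSpace Ω] (P : Measure Ω) [IsProbabilityMeasure P]
    (X C : Ω → ℝ) (𝒞 : Ω → ℕ) (k : ℕ)
    (hX : Measurable X) (hC : Measurable C)
    (hindep : IndepFun (fun ω => (X ω, 𝒞 ω)) C P)
    (hGcont : ∀ t : ℝ, P {ω | C ω = t} = 0)
    (Fbar Gbar Hbar : ℝ → ℝ)
    (hFbar : ∀ t, Fbar t = (P {ω | t < X ω}).toReal)
    (hGbar : ∀ t, Gbar t = (P {ω | t < C ω}).toReal)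
    (hHbar : ∀ t, Hbar t = Fbar t * Gbar t)
    (hFpos : ∀ t, 0 < Fbar t) (hGpos : ∀ t, 0 < Gbar t)
    (φ : ℝ → ℝ) (hφm : Measurable φ) (hφ : ∀ u, 0 ≤ φ u)
    (ψ : ℝ → ℝ)
    (hψ : ∀ u, ψ u = ∫ s in Set.Ioi u, φ s ∂(Measure.map X (P.restrict {ω | 𝒞 ω = k})))
    (h : ℝ → ℝ)
    (hh : ∀ z, h z = ∫ u in Set.Ioc (0 : ℝ) z, ψ u / (Hbar u * Gbar u) ∂(Measure.map C P))
    (U₂ U₃ : Ω → ℝ)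
    (hU₂ : ∀ ω, U₂ ω = (if X ω ≤ C ω then (0 : ℝ) else 1) / Hbar (min (X ω) (C ω))
        * ψ (min (X ω) (C ω)))
    (hU₃ : ∀ ω, U₃ ω = h (min (X ω) (C ω))) :
    ∫ ω, U₃ ω ^ 2 ∂P = 2 * ∫ ω, U₂ ω * U₃ ω ∂P ∧
      ∫ ω, U₃ ω ^ 2 ∂P
        = 2 * ∫ z, (∫ y in Set.Ioc (0 : ℝ) z,
            ψ y * h y / (Hbar y * Gbar y) ∂(Measure.map C P))
            ∂(Measure.map (fun ω => min (X ω) (C ω)) P) := by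
  set ν := Measure.map C P
  set μ := Measure.map (fun ω => min (X ω) (C ω)) P
  have : NullSingletonClass ν :=
    ⟨fun t => by rw [Measure.map_apply hC (measurableSet_singleton t)]; exact hGcont t⟩
  have hψ0 : 0 ≤ ψ := fun u => (hψ u).symm ▸ setIntegral_nonneg measurableSet_Ioi fun s _ => hφ s
  have hψm : Measurable ψ := (funext hψ).symm ▸ measurable_setIntegral_Ioi hφm hφ
  have hψanti : ∀ y u, y ≤ u → ψ y ≠ 0 → ψ u ≤ ψ y := by
    simp only [hψ]
    exact fun y u hyu hy => setIntegral_Ioi_le_of_ne_zero hφ hyu hy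
  have hF : Antitone Fbar := (funext hFbar).symm ▸ antitone_toReal_measure_lt X
  have hG : Antitone Gbar := (funext hGbar).symm ▸ antitone_toReal_measure_lt C
  have hHpos : ∀ u, 0 < Hbar u := fun u => hHbar u ▸ mul_pos (hFpos u) (hGpos u)
  have hH : Antitone Hbar := (funext hHbar).symm ▸
    hF.mul_of_nonneg hG (fun u => (hFpos u).le) fun u => (hGpos u).le
  have hD : Antitone fun u => Hbar u * Gbar u :=
    hH.mul_of_nonneg hG (fun u => (hHpos u).le) fun u => (hGpos u).le
  have hD0 : ∀ u, 0 < Hbar u * Gbar u := fun u => mul_pos (hHpos u) (hGpos u)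
  have hh0 : 0 ≤ h := fun z => (hh z).symm ▸
    setIntegral_nonneg measurableSet_Ioc fun u _ => div_nonneg (hψ0 u) (hD0 u).le
  have hhm : Measurable h := (funext hh).symm ▸
    measurable_setIntegral_Ioc (hψm.div hD.measurable) (fun u => div_nonneg (hψ0 u) (hD0 u).le) 0
  have hsq : ∀ z, ∫ y in Ioc 0 z, ψ y * h y / (Hbar y * Gbar y) ∂ν = h z ^ 2 / 2 := by
    simp only [hh]
    exact setIntegral_Ioc_mul_setIntegral_div hψm hψ0 hψanti hD hD0 0
  have hU₃sq :
      ∫ ω, U₃ ω ^ 2 ∂P = 2 * ∫ z, ∫ y in Ioc 0 z, ψ y * h y / (Hbar y * Gbar y) ∂ν ∂μ := by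
    simp_rw [hU₃, hsq]
    rw [← integral_const_mul, ← integral_map (hX.min hC).aemeasurable
      (hhm.pow_const 2).aestronglyMeasurable]
    congr 1 with z
    ring
  have hcross :
      ∫ ω, U₂ ω * U₃ ω ∂P = ∫ z, ∫ y in Ioc 0 z, ψ y * h y / (Hbar y * Gbar y) ∂ν ∂μ := by
    rw [← setIntegral_lt_mul_eq_integral_setIntegral_Ioc
      (r := fun y => ψ y * h y / (Hbar y * Gbar y)) hX hC
      (hindep.comp measurable_fst measurable_id) ((hψm.mul hhm).div hD.measurable)
      (fun y => div_nonneg (mul_nonneg (hψ0 y) (hh0 y)) (hD0 y).le)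
      (fun y hy => by simp [hh y, Ioc_eq_empty_of_le hy])
      (fun z => by
        simp only [hh]
        exact integrableOn_Ioc_mul_setIntegral_div hψm hψ0 hψanti hD hD0 0 z),
      ← integral_indicator (measurableSet_lt hC hX)]
    congr 1 with ω
    rw [hU₂, hU₃]
    by_cases hxc : X ω ≤ C ω
    · simp [hxc, not_lt.mpr hxc]
    · have hcx : C ω < X ω := not_le.mp hxc
      rw [indicator_of_mem (show ω ∈ {a | C a < X a} from hcx), if_neg hxc, min_eq_right hcx.le,
        measureReal_def, ← hGbar]
      field_simp [(hHpos (C ω)).ne', (hGpos (C ω)).ne']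
  exact ⟨by rw [hU₃sq, hcross], hU₃sq⟩

/-- With `U⁽³⁾ = ∫_0^Z ψ(φ_n,u) dC(u)` and `U⁽²⁾ = ((1-δ)/H̄(Z)) ψ(φ_n,Z)`, one has
`E[(U⁽³⁾)²] = 2 E[U⁽²⁾ U⁽³⁾] = 2 ∫_0^∞ (∫_0^z ψ(φ_n,y) h(y) dC(y)) dH(z)`,
where `h(z) = ∫_0^z ψ(φ_n,u) dC(u)` and `H` is the distribution of `Z`. -/
theorem stmt_12 {Ω : Type*} [MeasurableSpace Ω] (P : Measure Ω) [IsProbabilityMeasure P]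
    (X C : Ω → ℝ) (𝒞 : Ω → ℕ) (k : ℕ)
    (hX : Measurable X) (hC : Measurable C) (h𝒞 : Measurable 𝒞)
    (hXpos : ∀ ω, 0 ≤ X ω) (hCpos : ∀ ω, 0 ≤ C ω)
    (hindep : IndepFun (fun ω => (X ω, 𝒞 ω)) C P)
    (hFcont : ∀ t : ℝ, P {ω | X ω = t} = 0) (hGcont : ∀ t : ℝ, P {ω | C ω = t} = 0)
    (Fbar Gbar Hbar : ℝ → ℝ)
    (hFbar : ∀ t, Fbar t = (P {ω | t < X ω}).toReal)
    (hGbar : ∀ t, Gbar t = (P {ω | t < C ω}).toReal)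
    (hHbar : ∀ t, Hbar t = Fbar t * Gbar t)
    (hFpos : ∀ t, 0 < Fbar t) (hGpos : ∀ t, 0 < Gbar t)
    (φ : ℝ → ℝ) (hφm : Measurable φ) (hφ : ∀ u, 0 ≤ φ u)
    (ψ : ℝ → ℝ)
    (hψ : ∀ u, ψ u = ∫ s in Set.Ioi u, φ s ∂(Measure.map X (P.restrict {ω | 𝒞 ω = k})))
    (h : ℝ → ℝ)
    (hh : ∀ z, h z = ∫ u in Set.Ioc (0 : ℝ) z, ψ u / (Hbar u * Gbar u) ∂(Measure.map C P))
    (U₂ U₃ : Ω → ℝ)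
    (hU₂ : ∀ ω, U₂ ω = (if X ω ≤ C ω then (0 : ℝ) else 1) / Hbar (min (X ω) (C ω))
        * ψ (min (X ω) (C ω)))
    (hU₃ : ∀ ω, U₃ ω = h (min (X ω) (C ω)))
    (hInt33 : Integrable (fun ω => U₃ ω ^ 2) P)
    (hInt23 : Integrable (fun ω => U₂ ω * U₃ ω) P)
    (hIntd : Integrable
      (fun z => ∫ y in Set.Ioc (0 : ℝ) z, ψ y * h y / (Hbar y * Gbar y) ∂(Measure.map C P))
      (Measure.map (fun ω => min (X ω) (C ω)) P)) :
    ∫ ω, U₃ ω ^ 2 ∂P = 2 * ∫ ω, U₂ ω * U₃ ω ∂P ∧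
      ∫ ω, U₃ ω ^ 2 ∂P
        = 2 * ∫ z, (∫ y in Set.Ioc (0 : ℝ) z,
            ψ y * h y / (Hbar y * Gbar y) ∂(Measure.map C P))
            ∂(Measure.map (fun ω => min (X ω) (C ω)) P) :=
  stmt_12_general P X C 𝒞 k hX hC hindep hGcont Fbar Gbar Hbar hFbar hGbar hHbar hFpos hGpos φ hφm
    hφ ψ hψ h hh U₂ U₃ hU₂ hU₃
end

section
/- Let ℋ be an integrable real random variable with E[ℋ] well-defined, and for M > 0 set ℋ* = ℋ·1_{|ℋ|≤M} - E[ℋ·1_{|ℋ|≤M}]. If E[ℋ] = 0, then for independent inputs V_1, W_2 generating ℋ = ℋ(V_1,W_2) and ℋ** = ℋ* - ℋ*_{1•}(V_1) - ℋ*_{•1}(W_2) with the projections as above, one has E[|ℋ - ℋ**|] ≤ 4·E[|ℋ|·1_{|ℋ|>M}]. -/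
open MeasureTheory ProbabilityTheory

/-- For a centred kernel `ℋ` with vanishing conditional projections, truncated at level
`M` into `ℋ* = ℋ 1_{|ℋ|≤M} - E[ℋ 1_{|ℋ|≤M}]`, and recentred into
`ℋ** = ℋ* - ℋ*₁•(V₁) - ℋ*•₁(W₂)`, one has `E[|ℋ - ℋ**|] ≤ 4 E[|ℋ| 1_{|ℋ|>M}]`. -/
theorem stmt_15 {Ω : Type*} [MeasurableSpace Ω] (P : Measure Ω) [IsProbabilityMeasure P]
    (V₁ W₂ : Ω → ℝ) (hV : Measurable V₁) (hW : Measurable W₂)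
    (hindep : IndepFun V₁ W₂ P)
    (H : ℝ → ℝ → ℝ) (hm : Measurable (fun p : ℝ × ℝ => H p.1 p.2))
    (hint : Integrable (fun ω => H (V₁ ω) (W₂ ω)) P)
    (hcent : ∫ ω, H (V₁ ω) (W₂ ω) ∂P = 0)
    (hproj1 : ∀ v, ∫ ω, H v (W₂ ω) ∂P = 0)
    (hproj2 : ∀ w, ∫ ω, H (V₁ ω) w ∂P = 0)
    (M : ℝ) (hM : 0 < M)
    (Hstar : ℝ → ℝ → ℝ)
    (hHstar : ∀ v w, Hstar v w
      = (if |H v w| ≤ M then H v w else 0)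
        - ∫ ω, (if |H (V₁ ω) (W₂ ω)| ≤ M then H (V₁ ω) (W₂ ω) else 0) ∂P)
    (Hss : ℝ → ℝ → ℝ)
    (hHss : ∀ v w, Hss v w
      = Hstar v w - (∫ ω, Hstar v (W₂ ω) ∂P) - ∫ ω, Hstar (V₁ ω) w ∂P) :
    ∫ ω, |H (V₁ ω) (W₂ ω) - Hss (V₁ ω) (W₂ ω)| ∂P
      ≤ 4 * ∫ ω, |H (V₁ ω) (W₂ ω)| * (if M < |H (V₁ ω) (W₂ ω)| then (1 : ℝ) else 0) ∂P := by
  classical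
  set F : ℝ × ℝ → ℝ := fun p => H p.1 p.2 with hFdef
  set T : ℝ × ℝ → ℝ := fun p => if |H p.1 p.2| ≤ M then H p.1 p.2 else 0 with hTdef
  have hmF : Measurable F := hm
  have hmT : Measurable T :=
    Measurable.ite (measurableSet_le hm.abs measurable_const) hm measurable_const
  have hTb : ∀ p : ℝ × ℝ, ‖T p‖ ≤ M := by
    intro p
    simp only [hTdef, Real.norm_eq_abs]
    split
    · assumption
    · simpa using hM.le
  have hTleF : ∀ p : ℝ × ℝ, ‖T p‖ ≤ ‖F p‖ := by
    intro p
    simp only [hTdef, hFdef, Real.norm_eq_abs]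
    split
    · exact le_rfl
    · simpa using abs_nonneg _
  set μ := P.map V₁ with hμdef
  set ν := P.map W₂ with hνdef
  haveI : IsProbabilityMeasure μ := Measure.isProbabilityMeasure_map hV.aemeasurable
  haveI : IsProbabilityMeasure ν := Measure.isProbabilityMeasure_map hW.aemeasurable
  have hpair : Measurable (fun ω => (V₁ ω, W₂ ω)) := hV.prodMk hW
  have hmap : P.map (fun ω => (V₁ ω, W₂ ω)) = μ.prod ν :=
    (indepFun_iff_map_prod_eq_prod_map_map hV.aemeasurable hW.aemeasurable).mp hindep
  have key : ∀ g : ℝ × ℝ → ℝ, Measurable g →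
      ∫ ω, g (V₁ ω, W₂ ω) ∂P = ∫ p, g p ∂(μ.prod ν) := by
    intro g hg
    rw [← hmap, integral_map hpair.aemeasurable hg.aestronglyMeasurable]
  have keyW : ∀ g : ℝ → ℝ, Measurable g → ∫ ω, g (W₂ ω) ∂P = ∫ w, g w ∂ν := by
    intro g hg
    rw [hνdef, integral_map hW.aemeasurable hg.aestronglyMeasurable]
  have keyV : ∀ g : ℝ → ℝ, Measurable g → ∫ ω, g (V₁ ω) ∂P = ∫ v, g v ∂μ := by
    intro g hg
    rw [hμdef, integral_map hV.aemeasurable hg.aestronglyMeasurable]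
  have hFint : Integrable F (μ.prod ν) := by
    rw [← hmap]
    exact (integrable_map_measure hmF.aestronglyMeasurable hpair.aemeasurable).mpr hint
  have hTint : Integrable T (μ.prod ν) :=
    hFint.mono hmT.aestronglyMeasurable (Filter.Eventually.of_forall hTleF)
  set R : ℝ × ℝ → ℝ := fun p => F p - T p with hRdef
  have hmR : Measurable R := hmF.sub hmT
  have hRint : Integrable R (μ.prod ν) := hFint.sub hTint
  set a : ℝ → ℝ := fun v => ∫ w, T (v, w) ∂ν with hadef
  set b : ℝ → ℝ := fun w => ∫ v, T (v, w) ∂μ with hbdef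
  have hma : Measurable a := (hmT.stronglyMeasurable.integral_prod_right').measurable
  have hmb : Measurable b := (hmT.stronglyMeasurable.integral_prod_left').measurable
  have hab : ∀ v, |a v| ≤ M := by
    intro v
    have := norm_integral_le_of_norm_le_const (μ := ν) (f := fun w => T (v, w)) (C := M)
      (Filter.Eventually.of_forall fun w => hTb (v, w))
    simpa [Real.norm_eq_abs] using this
  have hbb : ∀ w, |b w| ≤ M := by
    intro w
    have := norm_integral_le_of_norm_le_const (μ := μ) (f := fun v => T (v, w)) (C := M)
      (Filter.Eventually.of_forall fun v => hTb (v, w))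
    simpa [Real.norm_eq_abs] using this
  set c : ℝ := ∫ p, T p ∂(μ.prod ν) with hcdef
  have hcent' : ∫ p, F p ∂(μ.prod ν) = 0 := by rw [← key F hmF]; exact hcent
  have hcR : c = - ∫ p, R p ∂(μ.prod ν) := by
    have h := integral_sub hFint hTint
    rw [hcent'] at h
    have : ∫ p, R p ∂(μ.prod ν) = 0 - c := h
    rw [this]; ring
  have hcabs : |c| ≤ ∫ p, ‖R p‖ ∂(μ.prod ν) := by
    rw [hcR, abs_neg]
    calc |∫ p, R p ∂(μ.prod ν)| = ‖∫ p, R p ∂(μ.prod ν)‖ := (Real.norm_eq_abs _).symm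
      _ ≤ ∫ p, ‖R p‖ ∂(μ.prod ν) := norm_integral_le_integral_norm _
  -- projections of F vanish
  have hproj1ν : ∀ v, ∫ w, F (v, w) ∂ν = 0 := by
    intro v
    rw [← keyW (fun w => F (v, w)) (hmF.comp measurable_prodMk_left)]
    exact hproj1 v
  have hproj2μ : ∀ w, ∫ v, F (v, w) ∂μ = 0 := by
    intro w
    rw [← keyV (fun v => F (v, w)) (hmF.comp measurable_prodMk_right)]
    exact hproj2 w
  have hTvint : ∀ v, Integrable (fun w => T (v, w)) ν := fun v =>
    (integrable_const M).mono' (hmT.comp measurable_prodMk_left).aestronglyMeasurable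
      (Filter.Eventually.of_forall fun w => hTb (v, w))
  have hTwint : ∀ w, Integrable (fun v => T (v, w)) μ := fun w =>
    (integrable_const M).mono' (hmT.comp measurable_prodMk_right).aestronglyMeasurable
      (Filter.Eventually.of_forall fun v => hTb (v, w))
  have haR : ∀ᵐ v ∂μ, |a v| ≤ ∫ w, ‖R (v, w)‖ ∂ν := by
    filter_upwards [hFint.prod_right_ae] with v hv
    have h := integral_sub hv (hTvint v)
    rw [hproj1ν v] at h
    have hv2 : a v = - ∫ w, R (v, w) ∂ν := by
      have : ∫ w, R (v, w) ∂ν = 0 - a v := h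
      rw [this]; ring
    rw [hv2, abs_neg]
    calc |∫ w, R (v, w) ∂ν| = ‖∫ w, R (v, w) ∂ν‖ := (Real.norm_eq_abs _).symm
      _ ≤ ∫ w, ‖R (v, w)‖ ∂ν := norm_integral_le_integral_norm _
  have hbR : ∀ᵐ w ∂ν, |b w| ≤ ∫ v, ‖R (v, w)‖ ∂μ := by
    filter_upwards [hFint.prod_left_ae] with w hw
    have h := integral_sub hw (hTwint w)
    rw [hproj2μ w] at h
    have hw2 : b w = - ∫ v, R (v, w) ∂μ := by
      have : ∫ v, R (v, w) ∂μ = 0 - b w := h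
      rw [this]; ring
    rw [hw2, abs_neg]
    calc |∫ v, R (v, w) ∂μ| = ‖∫ v, R (v, w) ∂μ‖ := (Real.norm_eq_abs _).symm
      _ ≤ ∫ v, ‖R (v, w)‖ ∂μ := norm_integral_le_integral_norm _
  have haint : Integrable a μ := hTint.integral_prod_left
  have hbint : Integrable b ν := hTint.integral_prod_right
  have haabs : ∫ v, |a v| ∂μ ≤ ∫ p, ‖R p‖ ∂(μ.prod ν) := by
    rw [integral_prod _ hRint.norm]
    exact integral_mono_ae haint.abs hRint.integral_norm_prod_left haR
  have hbabs : ∫ w, |b w| ∂ν ≤ ∫ p, ‖R p‖ ∂(μ.prod ν) := by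
    rw [integral_prod_symm _ hRint.norm]
    exact integral_mono_ae hbint.abs hRint.integral_norm_prod_right hbR
  -- rewriting Hstar and Hss
  have hcT : ∫ ω, T (V₁ ω, W₂ ω) ∂P = c := key T hmT
  have hcT' : ∫ ω, (if |H (V₁ ω) (W₂ ω)| ≤ M then H (V₁ ω) (W₂ ω) else 0) ∂P = c := hcT
  have hstar_eq : ∀ v w, Hstar v w = T (v, w) - c := by
    intro v w
    rw [hHstar v w, hcT']
  have hAeq : ∀ v, ∫ ω, Hstar v (W₂ ω) ∂P = a v - c := by
    intro v
    have heq : (fun ω => Hstar v (W₂ ω)) = fun ω => T (v, W₂ ω) - c := by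
      funext ω; exact hstar_eq v (W₂ ω)
    have h1 : Integrable (fun ω => T (v, W₂ ω)) P :=
      (integrable_const M).mono'
        ((hmT.comp measurable_prodMk_left).comp hW).aestronglyMeasurable
        (Filter.Eventually.of_forall fun ω => hTb (v, W₂ ω))
    rw [heq, integral_sub h1 (integrable_const c), integral_const, probReal_univ, one_smul,
      keyW (fun w => T (v, w)) (hmT.comp measurable_prodMk_left)]
  have hBeq : ∀ w, ∫ ω, Hstar (V₁ ω) w ∂P = b w - c := by
    intro w
    have heq : (fun ω => Hstar (V₁ ω) w) = fun ω => T (V₁ ω, w) - c := by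
      funext ω; exact hstar_eq (V₁ ω) w
    have h1 : Integrable (fun ω => T (V₁ ω, w)) P :=
      (integrable_const M).mono'
        ((hmT.comp measurable_prodMk_right).comp hV).aestronglyMeasurable
        (Filter.Eventually.of_forall fun ω => hTb (V₁ ω, w))
    rw [heq, integral_sub h1 (integrable_const c), integral_const, probReal_univ, one_smul,
      keyV (fun v => T (v, w)) (hmT.comp measurable_prodMk_right)]
  have hss_eq : ∀ v w, Hss v w = T (v, w) - a v - b w + c := by
    intro v w
    rw [hHss v w, hstar_eq v w, hAeq v, hBeq w]
    ring
  -- rewrite both sides as product-measure integrals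
  set G : ℝ × ℝ → ℝ := fun p => |F p - (T p - a p.1 - b p.2 + c)| with hGdef
  have hmG : Measurable G :=
    (hmF.sub (((hmT.sub (hma.comp measurable_fst)).sub (hmb.comp measurable_snd)).add
      measurable_const)).abs
  have hLHS : ∫ ω, |H (V₁ ω) (W₂ ω) - Hss (V₁ ω) (W₂ ω)| ∂P = ∫ p, G p ∂(μ.prod ν) := by
    rw [← key G hmG]
    refine integral_congr_ae (Filter.Eventually.of_forall fun ω => ?_)
    show |H (V₁ ω) (W₂ ω) - Hss (V₁ ω) (W₂ ω)| = G (V₁ ω, W₂ ω)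
    rw [hss_eq (V₁ ω) (W₂ ω)]
  have hptR : ∀ p : ℝ × ℝ,
      |H p.1 p.2| * (if M < |H p.1 p.2| then (1 : ℝ) else 0) = ‖R p‖ := by
    intro p
    simp only [hRdef, hFdef, hTdef, Real.norm_eq_abs]
    by_cases h : |H p.1 p.2| ≤ M
    · rw [if_neg (not_lt.mpr h), if_pos h]; simp
    · rw [if_pos (not_le.mp h), if_neg h]; simp
  have hRHS : ∫ ω, |H (V₁ ω) (W₂ ω)| * (if M < |H (V₁ ω) (W₂ ω)| then (1 : ℝ) else 0) ∂P
      = ∫ p, ‖R p‖ ∂(μ.prod ν) := by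
    rw [← key (fun p => ‖R p‖) hmR.norm]
    exact integral_congr_ae (Filter.Eventually.of_forall fun ω => hptR (V₁ ω, W₂ ω))
  rw [hLHS, hRHS]
  -- integrabilities on the product
  have h1 : Integrable (fun p : ℝ × ℝ => |a p.1|) (μ.prod ν) :=
    (integrable_const M).mono' ((hma.comp measurable_fst).abs).aestronglyMeasurable
      (Filter.Eventually.of_forall fun p => by
        simpa [Real.norm_eq_abs, abs_abs] using hab p.1)
  have h2 : Integrable (fun p : ℝ × ℝ => |b p.2|) (μ.prod ν) :=
    (integrable_const M).mono' ((hmb.comp measurable_snd).abs).aestronglyMeasurable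
      (Filter.Eventually.of_forall fun p => by
        simpa [Real.norm_eq_abs, abs_abs] using hbb p.2)
  have hfst : ∫ p, |a p.1| ∂(μ.prod ν) = ∫ v, |a v| ∂μ := by
    rw [integral_prod _ h1]; simp
  have hsnd : ∫ p, |b p.2| ∂(μ.prod ν) = ∫ w, |b w| ∂ν := by
    rw [integral_prod_symm _ h2]; simp
  have hmono : ∫ p, G p ∂(μ.prod ν)
      ≤ ∫ p, (‖R p‖ + |a p.1| + |b p.2| + |c|) ∂(μ.prod ν) := by
    refine integral_mono_of_nonneg (Filter.Eventually.of_forall fun p => abs_nonneg _)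
      (((hRint.norm.add h1).add h2).add (integrable_const |c|))
      (Filter.Eventually.of_forall fun p => ?_)
    have heq : F p - (T p - a p.1 - b p.2 + c) = R p + a p.1 + b p.2 - c := by
      simp only [hRdef]; ring
    show |F p - (T p - a p.1 - b p.2 + c)| ≤ ‖R p‖ + |a p.1| + |b p.2| + |c|
    rw [heq, Real.norm_eq_abs]
    have k1 : |R p + a p.1 + b p.2 - c| ≤ |R p + a p.1 + b p.2| + |c| := abs_sub _ _
    have k2 : |R p + a p.1 + b p.2| ≤ |R p + a p.1| + |b p.2| := abs_add_le _ _
    have k3 : |R p + a p.1| ≤ |R p| + |a p.1| := abs_add_le _ _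
    linarith
  have hsplit : ∫ p, (‖R p‖ + |a p.1| + |b p.2| + |c|) ∂(μ.prod ν)
      = ∫ p, ‖R p‖ ∂(μ.prod ν) + ∫ v, |a v| ∂μ + ∫ w, |b w| ∂ν + |c| := by
    have hI2 : Integrable (fun p : ℝ × ℝ => ‖R p‖ + |a p.1|) (μ.prod ν) := hRint.norm.add h1
    have hI3 : Integrable (fun p : ℝ × ℝ => ‖R p‖ + |a p.1| + |b p.2|) (μ.prod ν) := hI2.add h2
    rw [integral_add hI3 (integrable_const _), integral_add hI2 h2, integral_add hRint.norm h1,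
      integral_const, probReal_univ, one_smul, hfst, hsnd]
  have hnn : (0:ℝ) ≤ ∫ p, ‖R p‖ ∂(μ.prod ν) :=
    integral_nonneg fun p => norm_nonneg _
  linarith [hmono, hsplit, haabs, hbabs, hcabs]
end
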